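/- arXiv:math/0512597 — 6 statements merged into one kernel-verified Lean document; each statement's English description precedes it below -/
import Mathlib

section
/- Let k be a field with char k ≠ 2. Define the Heisenberg group ℋ as the set k^× × H × H with multiplication (t,x,x*)·(s,y,y*) = (t·s·⟨y*,x⟩, x+y, x*+y*). Then ℋ is a group, and the map U : ℋ → GL₄(k) defined by U(t,x,x*) = t·β_{x*}·α_x is an injective group homomorphism. -/
open Matrix

/-- The group `H = (ℤ/2ℤ)²`, with elements written `00, 01, 10, 11`. -/
abbrev H2 : Type := ZMod 2 × ZMod 2

/-- The pairing `⟨x, z⟩ = (−1)^(x₁z₁ + x₂z₂) ∈ k`. -/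
def pairing (k : Type*) [Field k] (x z : H2) : k :=
  (-1 : k) ^ (x.1.val * z.1.val + x.2.val * z.2.val)

/-- The same pairing, valued in the units of `k`. -/
def pairingU (k : Type*) [Field k] (x z : H2) : kˣ :=
  (-1 : kˣ) ^ (x.1.val * z.1.val + x.2.val * z.2.val)

/-- `α_x`: the permutation matrix of `z ↦ z + x`, sending `e_z` to `e_{z+x}`. -/
def alphaM (k : Type*) [Field k] (x : H2) : Matrix H2 H2 k :=
  Matrix.of fun i j => if i = j + x then 1 else 0

/-- `β_{x*}`: the diagonal matrix with entry `⟨x*, z⟩` at position `z`. -/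
def betaM (k : Type*) [Field k] (xs : H2) : Matrix H2 H2 k :=
  Matrix.diagonal fun z => pairing k xs z

/-- The Heisenberg multiplication `(t,x,x*)·(s,y,y*) = (t·s·⟨y*,x⟩, x+y, x*+y*)` on
`k^× × H × H`. -/
def hmul {k : Type*} [Field k] (a b : kˣ × H2 × H2) : kˣ × H2 × H2 :=
  (a.1 * b.1 * pairingU k b.2.2 a.2.1, a.2.1 + b.2.1, a.2.2 + b.2.2)

/-- The map `U(t,x,x*) = t · β_{x*} · α_x` into the 4×4 matrices. -/
def U {k : Type*} [Field k] (a : kˣ × H2 × H2) : Matrix H2 H2 k :=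
  (a.1 : k) • (betaM k a.2.2 * alphaM k a.2.1)

section Aux
variable {k : Type*} [Field k]

lemma h2_cases : ∀ a : ZMod 2, a = 0 ∨ a = 1 := by decide

lemma h2_add_self (x : H2) : x + x = 0 := by
  obtain ⟨a, b⟩ := x
  rcases h2_cases a with rfl | rfl <;> rcases h2_cases b with rfl | rfl <;> decide

lemma pairingU_add_left (x y z : H2) :
    pairingU k (x + y) z = pairingU k x z * pairingU k y z := by
  obtain ⟨x1,x2⟩ := x; obtain ⟨y1,y2⟩ := y; obtain ⟨z1,z2⟩ := z
  rcases h2_cases x1 with rfl|rfl <;> rcases h2_cases x2 with rfl|rfl <;>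
    rcases h2_cases y1 with rfl|rfl <;> rcases h2_cases y2 with rfl|rfl <;>
    rcases h2_cases z1 with rfl|rfl <;> rcases h2_cases z2 with rfl|rfl <;>
    simp [pairingU, show ((1+1:ZMod 2)).val = 0 from rfl, show ((1:ZMod 2)).val = 1 from rfl,
      pow_succ, neg_mul_neg]

lemma pairingU_symm (x z : H2) : pairingU k x z = pairingU k z x := by
  simp [pairingU, Nat.mul_comm]

lemma pairingU_add_right (x y z : H2) :
    pairingU k x (y + z) = pairingU k x y * pairingU k x z := by
  rw [pairingU_symm, pairingU_add_left, pairingU_symm, pairingU_symm z]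

lemma pairingU_zero_left (z : H2) : pairingU k 0 z = 1 := by simp [pairingU]
lemma pairingU_zero_right (x : H2) : pairingU k x 0 = 1 := by simp [pairingU]

lemma pairingU_mul_self (x z : H2) : pairingU k x z * pairingU k x z = 1 := by
  rw [← pairingU_add_left, h2_add_self, pairingU_zero_left]

lemma pairing_eq (x z : H2) : pairing k x z = (pairingU k x z : k) := by
  simp [pairing, pairingU]

lemma U_apply (a : kˣ × H2 × H2) (i j : H2) :
    U a i j = (a.1 : k) * (pairing k a.2.2 i * if i = j + a.2.1 then 1 else 0) := by
  simp [U, betaM, alphaM, Matrix.diagonal_mul]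

lemma h2_eq_add_iff (i l x : H2) : i = l + x ↔ l = i + x := by
  constructor <;> rintro rfl <;> rw [add_assoc, h2_add_self, add_zero]

lemma h2_cond_iff : ∀ i j x y : H2, i = j + (x + y) ↔ i + x = j + y := by decide

lemma U_one : U (1, 0, 0) = (1 : Matrix H2 H2 k) := by
  ext i j
  simp [U, betaM, alphaM, pairing, Matrix.one_apply, Matrix.diagonal_one]

lemma U_mul {k : Type*} [Field k] (a b : kˣ × H2 × H2) : U (hmul a b) = U a * U b := by
  obtain ⟨t, x, xs⟩ := a; obtain ⟨s, y, ys⟩ := b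
  ext i j
  rw [Matrix.mul_apply]
  simp only [U_apply, hmul]
  rw [Finset.sum_eq_single (i + x)
    (fun l _ hl => by rw [if_neg (fun hh => hl ((h2_eq_add_iff i l x).mp hh))]; ring)
    (by simp)]
  rw [if_pos ((h2_eq_add_iff i (i + x) x).mpr rfl)]
  by_cases hc : i + x = j + y
  · rw [if_pos ((h2_cond_iff i j x y).mpr hc), if_pos hc]
    simp only [pairing_eq, pairingU_add_left, pairingU_add_right, mul_one, Units.val_mul]
    ring
  · rw [if_neg (fun hh => hc ((h2_cond_iff i j x y).mp hh)), if_neg hc]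
    ring

lemma hmul_inv {k : Type*} [Field k] (a : kˣ × H2 × H2) :
    hmul a (a.1⁻¹ * pairingU k a.2.2 a.2.1, a.2.1, a.2.2) = (1, 0, 0) ∧
    hmul (a.1⁻¹ * pairingU k a.2.2 a.2.1, a.2.1, a.2.2) a = (1, 0, 0) := by
  obtain ⟨t, x, xs⟩ := a
  constructor <;>
  · simp only [hmul, Prod.mk.injEq, h2_add_self, and_true, eq_self_iff_true]
    simp only [mul_assoc, mul_left_comm _ t, mul_inv_cancel_left, inv_mul_cancel_left]
    exact pairingU_mul_self xs x

lemma zmod2_of_pow {k : Type*} [Field k] (hne : (-1 : k) ≠ 1) {a b : ZMod 2}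
    (h : (-1 : k) ^ a.val = (-1) ^ b.val) : a = b := by
  rcases h2_cases a with rfl | rfl <;> rcases h2_cases b with rfl | rfl <;>
    simp only [show ((0 : ZMod 2)).val = 0 from rfl, show ((1 : ZMod 2)).val = 1 from rfl,
      pow_zero, pow_one] at h
  · rfl
  · exact absurd h.symm hne
  · exact absurd h hne
  · rfl

end Aux

/-- The Heisenberg group `ℋ = k^× × H × H` with multiplication
`(t,x,x*)·(s,y,y*) = (t·s·⟨y*,x⟩, x+y, x*+y*)` is a group, and
`U : ℋ → GL₄(k)`, `U(t,x,x*) = t·β_{x*}·α_x`, is an injective group homomorphism. -/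
theorem statement0 (k : Type*) [Field k] (hchar : ringChar k ≠ 2) :
    (∀ a b c : kˣ × H2 × H2, hmul (hmul a b) c = hmul a (hmul b c)) ∧
    (∀ a : kˣ × H2 × H2, hmul (1, 0, 0) a = a) ∧
    (∀ a : kˣ × H2 × H2, hmul a (1, 0, 0) = a) ∧
    (∀ a : kˣ × H2 × H2, ∃ b, hmul a b = (1, 0, 0) ∧ hmul b a = (1, 0, 0)) ∧
    (∀ a : kˣ × H2 × H2, IsUnit (U a)) ∧
    (∀ a b : kˣ × H2 × H2, U (hmul a b) = U a * U b) ∧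
    Function.Injective (U (k := k)) := by
  have hne : (-1 : k) ≠ 1 := Ring.neg_one_ne_one_of_char_ne_two hchar
  refine ⟨?_, ?_, ?_, ?_, ?_, U_mul, ?_⟩
  · intro a b c
    obtain ⟨t, x, xs⟩ := a; obtain ⟨s, y, ys⟩ := b; obtain ⟨r, z, zs⟩ := c
    simp only [hmul, Prod.mk.injEq]
    refine ⟨?_, add_assoc .., add_assoc ..⟩
    rw [pairingU_add_left, pairingU_add_right]
    refine Units.ext ?_
    push_cast
    ring
  · intro a; simp [hmul, pairingU_zero_right]
  · intro a; simp [hmul, pairingU_zero_left]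
  · intro a
    exact ⟨_, hmul_inv a⟩
  · intro a
    obtain ⟨h1, h2⟩ := hmul_inv (k := k) a
    exact ⟨⟨U a, U _, by rw [← U_mul, h1, U_one], by rw [← U_mul, h2, U_one]⟩, rfl⟩
  · intro a b hab
    obtain ⟨t, x, xs⟩ := a; obtain ⟨s, y, ys⟩ := b
    have key : ∀ i j : H2, (t : k) * (pairing k xs i * if i = j + x then 1 else 0)
        = (s : k) * (pairing k ys i * if i = j + y then 1 else 0) := by
      intro i j
      have := congrFun (congrFun hab i) j
      simpa only [U_apply] using this
    have hzero : ∀ x y : H2, (0 : H2) = x + y ↔ x = y := by decide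
    have hp0 : ∀ zs : H2, pairing k zs 0 = 1 := by
      intro zs; simp [pairing]
    have hxy : x = y := by
      by_contra hne'
      have h0 := key 0 x
      rw [if_pos ((hzero x x).mpr rfl), if_neg (fun hh => hne' ((hzero x y).mp hh)),
        hp0, hp0, mul_zero, mul_zero, mul_one, mul_one] at h0
      exact Units.ne_zero t h0
    subst hxy
    have hts : (t : k) = s := by
      have h0 := key 0 x
      simp only [if_pos ((hzero x x).mpr rfl), hp0, one_mul, mul_one] at h0
      exact h0
    have hpair : ∀ i : H2, pairing k xs i = pairing k ys i := by
      intro i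
      have h0 := key i (i + x)
      rw [if_pos (by rw [add_assoc, h2_add_self, add_zero]), mul_one, mul_one, hts] at h0
      exact mul_left_cancel₀ (by exact_mod_cast Units.ne_zero s) h0
    have hne : (-1 : k) ≠ 1 := Ring.neg_one_ne_one_of_char_ne_two hchar
    have hxs : xs = ys := by
      have h1 := hpair (1, 0)
      have h2 := hpair (0, 1)
      obtain ⟨a1, a2⟩ := xs; obtain ⟨b1, b2⟩ := ys
      simp only [pairing, show ((0 : ZMod 2)).val = 0 from rfl,
        show ((1 : ZMod 2)).val = 1 from rfl, Nat.mul_one, Nat.mul_zero, Nat.add_zero,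
        Nat.zero_add] at h1 h2
      exact Prod.ext (zmod2_of_pow hne h1) (zmod2_of_pow hne h2)
    subst hxs
    have : t = s := Units.ext hts
    rw [this]
end

section
/- Let k be a field with char k ≠ 2. If a k-linear subspace V of k⁴ (with coordinates indexed by H) satisfies α₀₁·V ⊆ V, α₁₀·V ⊆ V, β₀₁·V ⊆ V and β₁₀·V ⊆ V, then V = {0} or V = k⁴. (This is the irreducibility of the 4-dimensional weight-1 representation of the Heisenberg group.) -/
/-!
The matrices leaving `V` stable form a subalgebra of `Matrix H2 H2 k`, so it suffices that
`α₀₁, α₁₀, β₀₁, β₁₀` generate the whole matrix algebra; a subspace stable under every matrix is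
`0` or `k⁴`. The `β`'s multiply like the characters of `H`, so by orthogonality of characters
`∑ₓ ⟨x, z⟩ β_x = 4 E_zz`, which needs `4 ≠ 0`. Composing with `α_{i-j}` gives every matrix
unit `E_ij`.
-/

open Matrix

def Submodule.mulVecStabilizer {R n : Type*} [CommSemiring R] [Fintype n] [DecidableEq n]
    (V : Submodule R (n → R)) : Subalgebra R (Matrix n n R) where
  carrier := {M | ∀ v ∈ V, M *ᵥ v ∈ V}
  mul_mem' {M N} hM hN v hv := by
    rw [← mulVec_mulVec]
    exact hM _ (hN v hv)
  add_mem' {M N} hM hN v hv := by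
    rw [add_mulVec]
    exact V.add_mem (hM v hv) (hN v hv)
  algebraMap_mem' c v hv := by
    rw [algebraMap_eq_diagonal, Pi.algebraMap_def, Algebra.algebraMap_self_apply,
      ← smul_one_eq_diagonal, smul_mulVec, one_mulVec]
    exact V.smul_mem c hv

theorem Submodule.eq_bot_or_eq_top_of_mulVecStabilizer_eq_top {k n : Type*} [Field k]
    [Fintype n] [DecidableEq n] {V : Submodule k (n → k)} (hV : V.mulVecStabilizer = ⊤) :
    V = ⊥ ∨ V = ⊤ := by
  refine or_iff_not_imp_left.2 fun hbot => ?_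
  obtain ⟨v, hv, hv0⟩ := V.ne_bot_iff.1 hbot
  obtain ⟨z, hz⟩ := Function.ne_iff.1 hv0
  refine V.eq_top_iff'.2 fun u => ?_
  have hmem : vecMulVec u (Pi.single z (v z)⁻¹) ∈ V.mulVecStabilizer := hV ▸ Algebra.mem_top
  convert hmem v hv
  rw [vecMulVec_mulVec, single_dotProduct, inv_mul_cancel₀ hz, MulOpposite.op_one, one_smul]

lemma H2.univ_eq : (Finset.univ : Finset H2) = {(0, 0), (0, 1), (1, 0), (1, 1)} := rfl

lemma H2.apply_mem_of_map_add {M : Type*} [Monoid M] {S : Submonoid M} {f : H2 → M}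
    (h0 : f 0 = 1) (hadd : ∀ a b, f (a + b) = f a * f b) (h01 : f (0, 1) ∈ S)
    (h10 : f (1, 0) ∈ S) (x : H2) : f x ∈ S := by
  have hcases : ∀ x : H2, x = 0 ∨ x = (0, 1) ∨ x = (1, 0) ∨ x = (1, 0) + (0, 1) := by decide
  rcases hcases x with rfl | rfl | rfl | rfl
  · exact h0 ▸ S.one_mem
  · exact h01
  · exact h10
  · exact hadd _ _ ▸ S.mul_mem h10 h01

section

variable (k : Type*) [Field k]

lemma pairing_eq_neg_one_pow_val (x z : H2) :
    pairing k x z = (-1) ^ (x.1 * z.1 + x.2 * z.2).val := by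
  rw [pairing, neg_one_pow_eq_pow_mod_two, ZMod.val_add, ZMod.val_mul, ZMod.val_mul,
    neg_one_pow_eq_pow_mod_two (_ % 2)]
  congr 1
  omega

lemma pairing_comm (x z : H2) : pairing k x z = pairing k z x := by
  simp only [pairing, mul_comm]

lemma pairing_add_left (a b z : H2) :
    pairing k (a + b) z = pairing k a z * pairing k b z := by
  simp only [pairing_eq_neg_one_pow_val, ← pow_add]
  conv_rhs => rw [neg_one_pow_eq_pow_mod_two, ← ZMod.val_add]
  congr 2
  simp only [Prod.fst_add, Prod.snd_add]
  ring

lemma pairing_add_right (x a b : H2) :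
    pairing k x (a + b) = pairing k x a * pairing k x b := by
  simp only [pairing_comm k x, pairing_add_left]

lemma sum_pairing (w : H2) : ∑ x, pairing k x w = if w = 0 then 4 else 0 := by
  have hcases : ∀ a : ZMod 2, a = 0 ∨ a = 1 := by decide
  obtain ⟨a, b⟩ := w
  rcases hcases a with rfl | rfl <;> rcases hcases b with rfl | rfl <;>
    simp [pairing, H2.univ_eq, ZMod.val_one]

lemma betaM_zero : betaM k 0 = 1 := by
  simp [betaM, pairing]

lemma betaM_add (a b : H2) : betaM k (a + b) = betaM k a * betaM k b := by
  simp only [betaM, diagonal_mul_diagonal, pairing_add_left]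

lemma alphaM_zero : alphaM k 0 = 1 := by
  ext i j
  simp [alphaM, one_apply]

lemma alphaM_add (a b : H2) : alphaM k (a + b) = alphaM k a * alphaM k b := by
  ext i j
  simp [alphaM, mul_apply, add_comm a b, add_assoc]

lemma sum_pairing_smul_betaM (z : H2) :
    ∑ x, pairing k x z • betaM k x = (4 : k) • diagonal (Pi.single z (1 : k)) := by
  have hsum (y : H2) : ∑ x, pairing k x z * pairing k x y = 4 * (Pi.single z 1 : H2 → k) y := by
    have hzy : ∀ z y : H2, z + y = 0 ↔ y = z := by decide
    simp only [← pairing_add_right, sum_pairing, Pi.single_apply, hzy]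
    split_ifs <;> simp
  ext i j
  rcases eq_or_ne i j with rfl | hij
  · simp [betaM, Matrix.sum_apply, hsum]
  · simp [betaM, Matrix.sum_apply, hij]

lemma alphaM_mul_diagonal_single (x z : H2) :
    alphaM k x * diagonal (Pi.single z 1) = single (z + x) z 1 := by
  ext i j
  simp only [alphaM, mul_diagonal, of_apply, Pi.single_apply, single_apply]
  aesop

end

theorem adjoin_alphaM_betaM_eq_top {k : Type*} [Field k] (hchar : ringChar k ≠ 2) :
    Algebra.adjoin k {alphaM k (0, 1), alphaM k (1, 0), betaM k (0, 1), betaM k (1, 0)} = ⊤ := by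
  set A := Algebra.adjoin k {alphaM k (0, 1), alphaM k (1, 0), betaM k (0, 1), betaM k (1, 0)}
  have halpha (x : H2) : alphaM k x ∈ A :=
    H2.apply_mem_of_map_add (S := A.toSubmonoid) (alphaM_zero k) (alphaM_add k)
      (Algebra.subset_adjoin (by simp)) (Algebra.subset_adjoin (by simp)) x
  have hbeta (x : H2) : betaM k x ∈ A :=
    H2.apply_mem_of_map_add (S := A.toSubmonoid) (betaM_zero k) (betaM_add k)
      (Algebra.subset_adjoin (by simp)) (Algebra.subset_adjoin (by simp)) x
  have hfour : (4 : k) ≠ 0 := by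
    simpa [show (4 : k) = 2 ^ 2 by norm_num] using Ring.two_ne_zero hchar
  have hdiag (z : H2) : diagonal (Pi.single z (1 : k)) ∈ A := by
    have h4 : (4 : k) • diagonal (Pi.single z (1 : k)) ∈ A :=
      sum_pairing_smul_betaM k z ▸ A.sum_mem fun x _ => A.smul_mem (hbeta x) _
    simpa [hfour] using A.smul_mem h4 (4 : k)⁻¹
  refine eq_top_iff.2 fun M _ => ?_
  rw [matrix_eq_sum_single M]
  refine A.sum_mem fun i _ => A.sum_mem fun j _ => ?_
  have hij : single i j (M i j) = M i j • (alphaM k (i - j) * diagonal (Pi.single j 1)) := by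
    rw [alphaM_mul_diagonal_single, add_sub_cancel, smul_single, smul_eq_mul, mul_one]
  rw [hij]
  exact A.smul_mem (A.mul_mem (halpha _) (hdiag j)) _

/-- If a `k`-linear subspace `V` of `k⁴` is stable under `α₀₁`, `α₁₀`, `β₀₁` and `β₁₀`,
then `V = 0` or `V = k⁴`: the 4-dimensional weight-1 representation of the Heisenberg
group is irreducible. -/
theorem statement1 {k : Type*} [Field k] (hchar : ringChar k ≠ 2)
    (V : Submodule k (H2 → k))
    (h1 : ∀ v ∈ V, (alphaM k (0, 1)).mulVec v ∈ V)
    (h2 : ∀ v ∈ V, (alphaM k (1, 0)).mulVec v ∈ V)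
    (h3 : ∀ v ∈ V, (betaM k (0, 1)).mulVec v ∈ V)
    (h4 : ∀ v ∈ V, (betaM k (1, 0)).mulVec v ∈ V) :
    V = ⊥ ∨ V = ⊤ := by
  have hgen : {alphaM k (0, 1), alphaM k (1, 0), betaM k (0, 1), betaM k (1, 0)} ⊆
      (V.mulVecStabilizer : Set (Matrix H2 H2 k)) := by
    rintro M (rfl | rfl | rfl | rfl)
    exacts [h1, h2, h3, h4]
  refine Submodule.eq_bot_or_eq_top_of_mulVecStabilizer_eq_top (top_unique ?_)
  exact adjoin_alphaM_betaM_eq_top hchar ▸ Algebra.adjoin_le hgen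
end

section
/- Let k be a field with char k ≠ 2, let k₀₀, k₀₁, k₁₀, k₁₁ ∈ k, and let F = S + 2k₀₀P + k₀₁Q₀₁ + k₁₀Q₁₀ + k₁₁Q₁₁. Suppose all four partial derivatives ∂F/∂x₀₀, ∂F/∂x₀₁, ∂F/∂x₁₀, ∂F/∂x₁₁ vanish at a point (ϑ₀₀, ϑ₀₁, ϑ₁₀, ϑ₁₁) ∈ k⁴. Then k₀₁·(ϑ₀₀²ϑ₀₁² − ϑ₁₀²ϑ₁₁²) = −(ϑ₀₀⁴ + ϑ₀₁⁴ − ϑ₁₀⁴ − ϑ₁₁⁴), k₁₀·(ϑ₀₀²ϑ₁₀² − ϑ₀₁²ϑ₁₁²) = −(ϑ₀₀⁴ − ϑ₀₁⁴ + ϑ₁₀⁴ − ϑ₁₁⁴), and k₁₁·(ϑ₀₀²ϑ₁₁² − ϑ₀₁²ϑ₁₀²) = −(ϑ₀₀⁴ − ϑ₀₁⁴ − ϑ₁₀⁴ + ϑ₁₁⁴). -/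
open MvPolynomial

/-- `S = x₀₀⁴+x₀₁⁴+x₁₀⁴+x₁₁⁴`, with variables `X 0 = x₀₀`, `X 1 = x₀₁`, `X 2 = x₁₀`,
`X 3 = x₁₁`. -/
noncomputable def S4 (k : Type*) [Field k] : MvPolynomial (Fin 4) k :=
  X 0 ^ 4 + X 1 ^ 4 + X 2 ^ 4 + X 3 ^ 4

/-- `P = x₀₀x₀₁x₁₀x₁₁`. -/
noncomputable def P4 (k : Type*) [Field k] : MvPolynomial (Fin 4) k :=
  X 0 * X 1 * X 2 * X 3

/-- `Q₀₁ = x₀₀²x₀₁² + x₁₀²x₁₁²`. -/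
noncomputable def Q01_4 (k : Type*) [Field k] : MvPolynomial (Fin 4) k :=
  X 0 ^ 2 * X 1 ^ 2 + X 2 ^ 2 * X 3 ^ 2

/-- `Q₁₀ = x₀₀²x₁₀² + x₀₁²x₁₁²`. -/
noncomputable def Q10_4 (k : Type*) [Field k] : MvPolynomial (Fin 4) k :=
  X 0 ^ 2 * X 2 ^ 2 + X 1 ^ 2 * X 3 ^ 2

/-- `Q₁₁ = x₀₀²x₁₁² + x₀₁²x₁₀²`. -/
noncomputable def Q11_4 (k : Type*) [Field k] : MvPolynomial (Fin 4) k :=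
  X 0 ^ 2 * X 3 ^ 2 + X 1 ^ 2 * X 2 ^ 2

/-- The Kummer quartic `F = S + 2k₀₀P + k₀₁Q₀₁ + k₁₀Q₁₀ + k₁₁Q₁₁`. -/
noncomputable def KummerF {k : Type*} [Field k] (k00 k01 k10 k11 : k) :
    MvPolynomial (Fin 4) k :=
  S4 k + C (2 * k00) * P4 k + C k01 * Q01_4 k + C k10 * Q10_4 k + C k11 * Q11_4 k

theorem eval_pderiv_KummerF {k : Type*} [Field k] (k00 k01 k10 k11 : k) (t : Fin 4 → k) :
    eval t (pderiv 0 (KummerF k00 k01 k10 k11)) = 4 * t 0 ^ 3 + 2 * k00 * t 1 * t 2 * t 3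
      + 2 * k01 * t 0 * t 1 ^ 2 + 2 * k10 * t 0 * t 2 ^ 2 + 2 * k11 * t 0 * t 3 ^ 2 ∧
    eval t (pderiv 1 (KummerF k00 k01 k10 k11)) = 4 * t 1 ^ 3 + 2 * k00 * t 0 * t 2 * t 3
      + 2 * k01 * t 1 * t 0 ^ 2 + 2 * k10 * t 1 * t 3 ^ 2 + 2 * k11 * t 1 * t 2 ^ 2 ∧
    eval t (pderiv 2 (KummerF k00 k01 k10 k11)) = 4 * t 2 ^ 3 + 2 * k00 * t 0 * t 1 * t 3
      + 2 * k01 * t 2 * t 3 ^ 2 + 2 * k10 * t 2 * t 0 ^ 2 + 2 * k11 * t 2 * t 1 ^ 2 ∧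
    eval t (pderiv 3 (KummerF k00 k01 k10 k11)) = 4 * t 3 ^ 3 + 2 * k00 * t 0 * t 1 * t 2
      + 2 * k01 * t 3 * t 2 ^ 2 + 2 * k10 * t 3 * t 1 ^ 2 + 2 * k11 * t 3 * t 0 ^ 2 := by
  refine ⟨?_, ?_, ?_, ?_⟩ <;>
  simp only [KummerF, S4, P4, Q01_4, Q10_4, Q11_4, map_add, map_mul, map_pow, Derivation.leibniz,
    Derivation.leibniz_pow, derivation_C, pderiv_X, Pi.single_apply, Fin.reduceEq, ↓reduceIte,
    smul_eq_mul, nsmul_eq_mul, Nat.cast_ofNat, mul_one, mul_zero, add_zero, zero_add, eval_X, eval_C,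
    eval_ofNat] <;>
  ring

/-- If all four partial derivatives of `F = S + 2k₀₀P + k₀₁Q₀₁ + k₁₀Q₁₀ + k₁₁Q₁₁`
vanish at `(ϑ₀₀, ϑ₀₁, ϑ₁₀, ϑ₁₁)`, then
`k₀₁(ϑ₀₀²ϑ₀₁² − ϑ₁₀²ϑ₁₁²) = −(ϑ₀₀⁴+ϑ₀₁⁴−ϑ₁₀⁴−ϑ₁₁⁴)`, and similarly for `k₁₀`, `k₁₁`. -/
theorem statement6 {k : Type*} [Field k] (hchar : ringChar k ≠ 2)
    (k00 k01 k10 k11 t00 t01 t10 t11 : k)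
    (hnode : ∀ z : Fin 4,
      eval ![t00, t01, t10, t11] (pderiv z (KummerF k00 k01 k10 k11)) = 0) :
    k01 * (t00 ^ 2 * t01 ^ 2 - t10 ^ 2 * t11 ^ 2)
        = -(t00 ^ 4 + t01 ^ 4 - t10 ^ 4 - t11 ^ 4) ∧
    k10 * (t00 ^ 2 * t10 ^ 2 - t01 ^ 2 * t11 ^ 2)
        = -(t00 ^ 4 - t01 ^ 4 + t10 ^ 4 - t11 ^ 4) ∧
    k11 * (t00 ^ 2 * t11 ^ 2 - t01 ^ 2 * t10 ^ 2)
        = -(t00 ^ 4 - t01 ^ 4 - t10 ^ 4 + t11 ^ 4) := by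
  obtain ⟨h0, h1, h2, h3⟩ := eval_pderiv_KummerF k00 k01 k10 k11 ![t00, t01, t10, t11]
  rw [hnode, eq_comm] at h0 h1 h2 h3
  simp only [Matrix.cons_val_zero, Matrix.cons_val_one, Matrix.cons_val_two,
    Matrix.cons_val_three, Matrix.head_cons, Matrix.tail_cons] at h0 h1 h2 h3
  have hfour : (4 : k) ≠ 0 := by
    simpa only [two_mul, two_add_two_eq_four] using mul_self_ne_zero.2 (Ring.two_ne_zero hchar)
  -- In `∑ εᵢ ϑᵢ ∂ᵢF(ϑ)` with `ε` a nontrivial character of `(ℤ/2)²` on the indices, the `P`-term and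
  -- the two `Q`-terms not matching `ε` cancel; what remains is `4` times the claimed identity.
  refine ⟨?_, ?_, ?_⟩ <;> refine mul_left_cancel₀ hfour ?_
  · linear_combination t00 * h0 + t01 * h1 - t10 * h2 - t11 * h3
  · linear_combination t00 * h0 - t01 * h1 + t10 * h2 - t11 * h3
  · linear_combination t00 * h0 - t01 * h1 - t10 * h2 + t11 * h3
end

section
/- Let k be a field with char k ≠ 2, let k₀₀, k₀₁, k₁₀, k₁₁ ∈ k, and let F = S + 2k₀₀P + k₀₁Q₀₁ + k₁₀Q₁₀ + k₁₁Q₁₁. Suppose there is a point (ϑ₀₀, ϑ₀₁, ϑ₁₀, ϑ₁₁) ∈ k⁴ with ϑ₀₀ϑ₀₁ϑ₁₀ϑ₁₁ ≠ 0, ϑ₀₀²ϑ₀₁² ≠ ϑ₁₀²ϑ₁₁², ϑ₀₀²ϑ₁₀² ≠ ϑ₀₁²ϑ₁₁² and ϑ₀₀²ϑ₁₁² ≠ ϑ₀₁²ϑ₁₀², at which all four partial derivatives of F vanish. Then the coefficients satisfy the cubic relationship 4 + k₀₁k₁₀k₁₁ − k₀₁² − k₁₀² − k₁₁² + k₀₀²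 = 0. -/
open MvPolynomial

/-!
Write `a, b, c, d` for the squares of the coordinates of the node and `p` for their product, so
that `p ^ 2 = a * b * c * d`. The equations `ϑᵢ ∂F/∂xᵢ (ϑ) = 0` are linear in the coefficients:
their sums and differences determine `k₀₁, k₁₀, k₁₁` as rational functions of `a, b, c, d` (this
is where `ab ≠ cd`, `ac ≠ bd`, `ad ≠ bc` enter) and `2k₀₀p` as a polynomial `-Σ` in them. For
these values of `k₀₁, k₁₀, k₁₁` one has the identity
`4 (4 + k₀₁k₁₀k₁₁ - k₀₁² - k₁₀² - k₁₁²) abcd = -Σ²`, while `Σ² = (2k₀₀p)² = 4k₀₀² abcd`.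
-/

section KummerNode

variable {k : Type*} [Field k]

theorem four_mul_kummerCubic_mul_eq_neg_sq {a b c d k01 k10 k11 : k}
    (hab : a * b ≠ c * d) (hac : a * c ≠ b * d) (had : a * d ≠ b * c)
    (h01 : k01 * (a * b - c * d) = c ^ 2 + d ^ 2 - a ^ 2 - b ^ 2)
    (h10 : k10 * (a * c - b * d) = b ^ 2 + d ^ 2 - a ^ 2 - c ^ 2)
    (h11 : k11 * (a * d - b * c) = b ^ 2 + c ^ 2 - a ^ 2 - d ^ 2) :
    4 * (4 + k01 * k10 * k11 - k01 ^ 2 - k10 ^ 2 - k11 ^ 2) * (a * b * c * d) =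
      -(a ^ 2 + b ^ 2 + c ^ 2 + d ^ 2 + k01 * (a * b + c * d) + k10 * (a * c + b * d) +
        k11 * (a * d + b * c)) ^ 2 := by
  rw [← sub_ne_zero] at hab hac had
  rw [eq_div_of_mul_eq hab h01, eq_div_of_mul_eq hac h10, eq_div_of_mul_eq had h11]
  -- Abstracting the denominators stops `field_simp` from expanding them, which defeats it.
  generalize hu : a * b - c * d = u at hab ⊢
  generalize hv : a * c - b * d = v at hac ⊢
  generalize hw : a * d - b * c = w at had ⊢
  field_simp
  subst hu hv hw
  ring

theorem kummerCubic_add_sq_eq_zero {a b c d p k00 k01 k10 k11 : k}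
    (h2 : (2 : k) ≠ 0) (hp : p ≠ 0) (hp2 : p ^ 2 = a * b * c * d)
    (hab : a * b ≠ c * d) (hac : a * c ≠ b * d) (had : a * d ≠ b * c)
    (ea : 2 * a ^ 2 + k00 * p + k01 * (a * b) + k10 * (a * c) + k11 * (a * d) = 0)
    (eb : 2 * b ^ 2 + k00 * p + k01 * (a * b) + k10 * (b * d) + k11 * (b * c) = 0)
    (ec : 2 * c ^ 2 + k00 * p + k01 * (c * d) + k10 * (a * c) + k11 * (b * c) = 0)
    (ed : 2 * d ^ 2 + k00 * p + k01 * (c * d) + k10 * (b * d) + k11 * (a * d) = 0) :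
    4 + k01 * k10 * k11 - k01 ^ 2 - k10 ^ 2 - k11 ^ 2 + k00 ^ 2 = 0 := by
  have h01 : k01 * (a * b - c * d) = c ^ 2 + d ^ 2 - a ^ 2 - b ^ 2 :=
    mul_left_cancel₀ h2 (by linear_combination ea + eb - ec - ed)
  have h10 : k10 * (a * c - b * d) = b ^ 2 + d ^ 2 - a ^ 2 - c ^ 2 :=
    mul_left_cancel₀ h2 (by linear_combination ea + ec - eb - ed)
  have h11 : k11 * (a * d - b * c) = b ^ 2 + c ^ 2 - a ^ 2 - d ^ 2 :=
    mul_left_cancel₀ h2 (by linear_combination ea + ed - eb - ec)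
  have hsum : a ^ 2 + b ^ 2 + c ^ 2 + d ^ 2 + k01 * (a * b + c * d) + k10 * (a * c + b * d) +
      k11 * (a * d + b * c) = -(2 * k00 * p) :=
    mul_left_cancel₀ h2 (by linear_combination ea + eb + ec + ed)
  have hcubic := four_mul_kummerCubic_mul_eq_neg_sq hab hac had h01 h10 h11
  rw [hsum] at hcubic
  have h4abcd : 2 ^ 2 * (a * b * c * d) ≠ 0 :=
    mul_ne_zero (pow_ne_zero 2 h2) (hp2 ▸ pow_ne_zero 2 hp)
  refine (mul_eq_zero.1 ?_).resolve_right h4abcd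
  linear_combination hcubic - 4 * k00 ^ 2 * hp2

theorem kummerF_euler_equations (h2 : (2 : k) ≠ 0)
    {k00 k01 k10 k11 t00 t01 t10 t11 : k}
    (hnode : ∀ z : Fin 4,
      eval ![t00, t01, t10, t11] (pderiv z (KummerF k00 k01 k10 k11)) = 0) :
    let p := t00 * t01 * t10 * t11
    (2 * (t00 ^ 2) ^ 2 + k00 * p + k01 * (t00 ^ 2 * t01 ^ 2) + k10 * (t00 ^ 2 * t10 ^ 2) +
        k11 * (t00 ^ 2 * t11 ^ 2) = 0) ∧
      (2 * (t01 ^ 2) ^ 2 + k00 * p + k01 * (t00 ^ 2 * t01 ^ 2) + k10 * (t01 ^ 2 * t11 ^ 2) +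
        k11 * (t01 ^ 2 * t10 ^ 2) = 0) ∧
      (2 * (t10 ^ 2) ^ 2 + k00 * p + k01 * (t10 ^ 2 * t11 ^ 2) + k10 * (t00 ^ 2 * t10 ^ 2) +
        k11 * (t01 ^ 2 * t10 ^ 2) = 0) ∧
      (2 * (t11 ^ 2) ^ 2 + k00 * p + k01 * (t10 ^ 2 * t11 ^ 2) + k10 * (t01 ^ 2 * t11 ^ 2) +
        k11 * (t00 ^ 2 * t11 ^ 2) = 0) := by
  have d0 := hnode 0
  have d1 := hnode 1
  have d2 := hnode 2
  have d3 := hnode 3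
  simp only [KummerF, S4, P4, Q01_4, Q10_4, Q11_4, map_add, map_mul, map_pow,
    Derivation.leibniz, Derivation.leibniz_pow, derivation_C, pderiv_X, Pi.single_eq_same,
    Pi.single_eq_of_ne, Fin.reduceEq, ne_eq, one_ne_zero, zero_ne_one, not_false_eq_true,
    Nat.succ_eq_add_one, Nat.reduceAdd, Nat.add_one_sub_one, Nat.cast_ofNat, Fin.isValue,
    smul_eq_mul, nsmul_eq_mul, mul_one, mul_zero, add_zero, zero_add, pow_one,
    eval_ofNat, eval_X, eval_C, Matrix.cons_val_zero, Matrix.cons_val_one, Matrix.cons_val]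
    at d0 d1 d2 d3
  refine ⟨?_, ?_, ?_, ?_⟩ <;> apply mul_left_cancel₀ h2
  · linear_combination t00 * d0
  · linear_combination t01 * d1
  · linear_combination t10 * d2
  · linear_combination t11 * d3

end KummerNode

/-- If the Kummer quartic `F` has a node `(ϑ₀₀, ϑ₀₁, ϑ₁₀, ϑ₁₁)` with
`ϑ₀₀ϑ₀₁ϑ₁₀ϑ₁₁ ≠ 0`, `ϑ₀₀²ϑ₀₁² ≠ ϑ₁₀²ϑ₁₁²`, `ϑ₀₀²ϑ₁₀² ≠ ϑ₀₁²ϑ₁₁²`,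
`ϑ₀₀²ϑ₁₁² ≠ ϑ₀₁²ϑ₁₀²`, then the coefficients satisfy the cubic relationship
`4 + k₀₁k₁₀k₁₁ − k₀₁² − k₁₀² − k₁₁² + k₀₀² = 0`. -/
theorem statement7 {k : Type*} [Field k] (hchar : ringChar k ≠ 2)
    (k00 k01 k10 k11 t00 t01 t10 t11 : k)
    (hnz : t00 * t01 * t10 * t11 ≠ 0)
    (h01 : t00 ^ 2 * t01 ^ 2 ≠ t10 ^ 2 * t11 ^ 2)
    (h10 : t00 ^ 2 * t10 ^ 2 ≠ t01 ^ 2 * t11 ^ 2)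
    (h11 : t00 ^ 2 * t11 ^ 2 ≠ t01 ^ 2 * t10 ^ 2)
    (hnode : ∀ z : Fin 4,
      eval ![t00, t01, t10, t11] (pderiv z (KummerF k00 k01 k10 k11)) = 0) :
    4 + k01 * k10 * k11 - k01 ^ 2 - k10 ^ 2 - k11 ^ 2 + k00 ^ 2 = 0 := by
  have h2 : (2 : k) ≠ 0 := Ring.two_ne_zero hchar
  obtain ⟨ea, eb, ec, ed⟩ := kummerF_euler_equations h2 hnode
  exact kummerCubic_add_sq_eq_zero h2 hnz (by ring) h01 h10 h11 ea eb ec ed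
end

section
/- Let R be an integral domain and let k₀₀, k₀₁, k₁₀, k₁₁ ∈ R satisfy 4 + k₀₁k₁₀k₁₁ − k₀₁² − k₁₀² − k₁₁² + k₀₀² = 0, and suppose k₀₁ ≠ ±2, k₁₀ ≠ ±2 and k₁₁ ≠ ±2. Then all eight of the following elements are nonzero: k₀₁+k₁₀+k₁₁+2+k₀₀, k₀₁+k₁₀+k₁₁+2−k₀₀, k₀₁+k₁₀−k₁₁−2+k₀₀, k₀₁+k₁₀−k₁₁−2−k₀₀, k₀₁−k₁₀+k₁₁−2+k₀₀, k₀₁−k₁₀+k₁₁−2−k₀₀, −k₀₁+k₁₀+k₁₁−2+k₀₀, −k₀₁+k₁₀+k₁₁−2−k₀₀. -/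
/-!
Substituting `k₀₀ = ∓(k₀₁ + k₁₀ + k₁₁ + 2)` turns the cubic relation into
`(k₀₁ + 2)(k₁₀ + 2)(k₁₁ + 2) = 0`. The relation is invariant under negating two of
`k₀₁, k₁₀, k₁₁`, and these sign changes carry the first pair of forms to the other three.
-/

theorem add_add_add_two_mul_sub_eq_of_kummer {R : Type*} [CommRing R] {a b c d : R}
    (h : 4 + a * b * c - a ^ 2 - b ^ 2 - c ^ 2 + d ^ 2 = 0) :
    (a + b + c + 2 + d) * (a + b + c + 2 - d) = (a + 2) * (b + 2) * (c + 2) := by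
  linear_combination -h

theorem add_add_add_two_add_ne_zero_of_kummer {R : Type*} [CommRing R] [IsDomain R]
    {a b c d : R} (h : 4 + a * b * c - a ^ 2 - b ^ 2 - c ^ 2 + d ^ 2 = 0)
    (ha : a ≠ -2) (hb : b ≠ -2) (hc : c ≠ -2) :
    a + b + c + 2 + d ≠ 0 ∧ a + b + c + 2 - d ≠ 0 := by
  have two_add_ne_zero {x : R} (hx : x ≠ -2) : x + 2 ≠ 0 :=
    fun h => hx (eq_neg_of_add_eq_zero_left h)
  refine mul_ne_zero_iff.mp ?_
  rw [add_add_add_two_mul_sub_eq_of_kummer h]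
  exact mul_ne_zero (mul_ne_zero (two_add_ne_zero ha) (two_add_ne_zero hb)) (two_add_ne_zero hc)

/-- If `k₀₀, k₀₁, k₁₀, k₁₁` in an integral domain satisfy the cubic relationship
`4 + k₀₁k₁₀k₁₁ − k₀₁² − k₁₀² − k₁₁² + k₀₀² = 0` and `k₀₁, k₁₀, k₁₁ ≠ ±2`, then all
eight listed elements are nonzero. -/
theorem statement9 {R : Type*} [CommRing R] [IsDomain R] (k00 k01 k10 k11 : R)
    (hcubic : 4 + k01 * k10 * k11 - k01 ^ 2 - k10 ^ 2 - k11 ^ 2 + k00 ^ 2 = 0)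
    (h01p : k01 ≠ 2) (h01m : k01 ≠ -2)
    (h10p : k10 ≠ 2) (h10m : k10 ≠ -2)
    (h11p : k11 ≠ 2) (h11m : k11 ≠ -2) :
    k01 + k10 + k11 + 2 + k00 ≠ 0 ∧
    k01 + k10 + k11 + 2 - k00 ≠ 0 ∧
    k01 + k10 - k11 - 2 + k00 ≠ 0 ∧
    k01 + k10 - k11 - 2 - k00 ≠ 0 ∧
    k01 - k10 + k11 - 2 + k00 ≠ 0 ∧
    k01 - k10 + k11 - 2 - k00 ≠ 0 ∧
    -k01 + k10 + k11 - 2 + k00 ≠ 0 ∧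
    -k01 + k10 + k11 - 2 - k00 ≠ 0 := by
  have h01p' : -k01 ≠ -2 := neg_injective.ne h01p
  have h10p' : -k10 ≠ -2 := neg_injective.ne h10p
  have h11p' : -k11 ≠ -2 := neg_injective.ne h11p
  obtain ⟨h₁, h₂⟩ := add_add_add_two_add_ne_zero_of_kummer hcubic h01m h10m h11m
  obtain ⟨h₃, h₄⟩ := add_add_add_two_add_ne_zero_of_kummer (d := k00)
    (by linear_combination hcubic) h01p' h10p' h11m
  obtain ⟨h₅, h₆⟩ := add_add_add_two_add_ne_zero_of_kummer (d := k00)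
    (by linear_combination hcubic) h01p' h10m h11p'
  obtain ⟨h₇, h₈⟩ := add_add_add_two_add_ne_zero_of_kummer (d := k00)
    (by linear_combination hcubic) h01m h10p' h11p'
  refine ⟨h₁, h₂, fun h => h₄ ?_, fun h => h₃ ?_, fun h => h₆ ?_, fun h => h₅ ?_,
    fun h => h₈ ?_, fun h => h₇ ?_⟩ <;> linear_combination -h
end

section
/- Let K be a field of characteristic 3 and let μ ∈ K with μ ≠ 0 and μ ≠ 1. Let E_μ be the elliptic curve over K with affine Weierstrass equation y² = x(x−1)(x−μ) = x³ − (μ+1)x² + μx, and let q = (x₁, y₁) be an affine K-point of E_μ. If (μ+1)·x₁³ + μ² ≠ 0, then 3q is an affine point of E_μ whose x-coordinate equals ( x₁³ · (x₁³ + μ(μ+1))² ) / ( ((μ+1)·x₁³ + μ²)² ), equivalently (x₁⁹ + 2μ(μ+1)x₁⁶ + μ²(μ+1)²x₁³) / ((μ+1)x₁³ + μ²)². -/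
set_option maxHeartbeats 2000000


open WeierstrassCurve

/-- The elliptic curve `E_μ : y² = x(x−1)(x−μ) = x³ − (μ+1)x² + μx`. -/
def Emu {K : Type*} [Field K] (μ : K) : WeierstrassCurve.Affine K :=
  { a₁ := 0, a₂ := -(μ + 1), a₃ := 0, a₄ := μ, a₆ := 0 }

open Classical in
/-- In characteristic 3, on `E_μ : y² = x(x−1)(x−μ)` with `μ ≠ 0, 1`, if
`q = (x₁, y₁)` is an affine point and `(μ+1)x₁³ + μ² ≠ 0`, then `3q` is an affine
point with `x`-coordinate `x₁³(x₁³ + μ(μ+1))² / ((μ+1)x₁³ + μ²)²`, equivalently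
`(x₁⁹ + 2μ(μ+1)x₁⁶ + μ²(μ+1)²x₁³) / ((μ+1)x₁³ + μ²)²`. -/
theorem statement15 {K : Type*} [Field K] [CharP K 3]
    (μ : K) (hμ0 : μ ≠ 0) (hμ1 : μ ≠ 1)
    (x₁ y₁ : K) (h : (Emu μ).Nonsingular x₁ y₁)
    (hden : (μ + 1) * x₁ ^ 3 + μ ^ 2 ≠ 0) :
    (∃ (y₃ : K) (h₃ : (Emu μ).Nonsingular
        ((x₁ ^ 3 * (x₁ ^ 3 + μ * (μ + 1)) ^ 2) / (((μ + 1) * x₁ ^ 3 + μ ^ 2) ^ 2)) y₃),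
      (3 : ℤ) • (WeierstrassCurve.Affine.Point.some _ _ h)
        = WeierstrassCurve.Affine.Point.some _ _ h₃) ∧
    (x₁ ^ 3 * (x₁ ^ 3 + μ * (μ + 1)) ^ 2) / (((μ + 1) * x₁ ^ 3 + μ ^ 2) ^ 2)
      = (x₁ ^ 9 + 2 * μ * (μ + 1) * x₁ ^ 6 + μ ^ 2 * (μ + 1) ^ 2 * x₁ ^ 3) /
          (((μ + 1) * x₁ ^ 3 + μ ^ 2) ^ 2) := by
  have h3 : (3 : K) = 0 := by exact_mod_cast CharP.cast_eq_zero K 3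
  have hsq : (((μ + 1) * x₁ ^ 3 + μ ^ 2) ^ 2) ≠ 0 := pow_ne_zero 2 hden
  have heq : y₁ ^ 2 = x₁ ^ 3 - (μ + 1) * x₁ ^ 2 + μ * x₁ := by
    have he := h.left
    rw [WeierstrassCurve.Affine.equation_iff] at he
    simp only [Emu] at he
    linear_combination he
  refine ⟨?_, by rw [div_eq_div_iff hsq hsq]; ring⟩
  by_cases hy : y₁ = 0
  · -- y₁ = 0 : q is 2-torsion, 3q = q
    have hroot : x₁ * (x₁ - 1) * (x₁ - μ) = 0 := by
      rw [hy] at heq; linear_combination -heq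
    have hx : (x₁ ^ 3 * (x₁ ^ 3 + μ * (μ + 1)) ^ 2) / (((μ + 1) * x₁ ^ 3 + μ ^ 2) ^ 2) = x₁ := by
      rw [div_eq_iff hsq]
      rcases mul_eq_zero.mp hroot with hr | hr
      · rcases mul_eq_zero.mp hr with hr | hr
        · rw [hr]; ring
        · rw [sub_eq_zero] at hr; rw [hr]; ring
      · rw [sub_eq_zero] at hr; rw [hr]; ring
    rw [hx]
    refine ⟨y₁, h, ?_⟩
    have hne : y₁ = (Emu μ).negY x₁ y₁ := by
      simp [WeierstrassCurve.Affine.negY, Emu, hy]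
    rw [show (3 : ℤ) = 1 + 1 + 1 by norm_num, add_smul, add_smul, one_smul,
      WeierstrassCurve.Affine.Point.add_self_of_Y_eq hne, zero_add]
  · -- y₁ ≠ 0
    have h2y : (2 : K) * y₁ ≠ 0 := by
      intro hc
      apply hy
      have h2 : (2 : K) ≠ 0 := by
        intro h2'
        have : (1 : K) = 0 := by linear_combination h3 - h2'
        exact one_ne_zero this
      exact (mul_eq_zero.mp hc).resolve_left h2
    have hyne : y₁ ≠ (Emu μ).negY x₁ y₁ := by
      simp only [WeierstrassCurve.Affine.negY, Emu]
      intro hc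
      apply h2y
      linear_combination hc
    set L : K := (Emu μ).slope x₁ x₁ y₁ y₁ with hLdef
    have hLv : L = ((μ + 1) * x₁ + μ) / (-y₁) := by
      rw [hLdef, WeierstrassCurve.Affine.slope_of_Y_ne rfl hyne]
      simp only [WeierstrassCurve.Affine.negY, Emu]
      rw [div_eq_div_iff (by intro hc; apply h2y; linear_combination hc) (neg_ne_zero.mpr hy)]
      linear_combination (-x₁ ^ 2 * y₁ - μ * y₁) * h3
    set X₂ : K := (Emu μ).addX x₁ x₁ L with hX2def
    set Y₂ : K := (Emu μ).addY x₁ x₁ y₁ L with hY2def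
    have hX2v : X₂ = x₁ + ((μ + 1) * x₁ ^ 3 + μ ^ 2) / y₁ ^ 2 := by
      rw [hX2def, WeierstrassCurve.Affine.addX, hLv]
      simp only [Emu]
      field_simp
      linear_combination ((1 + μ) - 3 * x₁) * heq +
        (μ * (μ + 1) * x₁ - x₁ * (x₁ ^ 3 - (μ + 1) * x₁ ^ 2 + μ * x₁)) * h3
    have hY2v : Y₂ = ((μ + 1) * x₁ + μ) * ((μ + 1) * x₁ ^ 3 + μ ^ 2) / y₁ ^ 3 - y₁ := by
      rw [hY2def, WeierstrassCurve.Affine.addY, WeierstrassCurve.Affine.negAddY,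
        WeierstrassCurve.Affine.negY, WeierstrassCurve.Affine.addX, hLv]
      simp only [Emu]
      field_simp
      linear_combination ((μ + 1) * x₁ + μ) * (μ + 1) * heq +
        ((μ + 1) * x₁ + μ) * (μ * (μ + 1) * x₁ - x₁ * y₁ ^ 2) * h3
    have hXne : X₂ ≠ x₁ := by
      rw [hX2v]
      intro hc
      apply hden
      have h4 : ((μ + 1) * x₁ ^ 3 + μ ^ 2) / y₁ ^ 2 = 0 := by linear_combination hc
      exact (div_eq_zero_iff.mp h4).resolve_right (pow_ne_zero 2 hy)
    have hX3 : (Emu μ).addX X₂ x₁ ((Emu μ).slope X₂ x₁ Y₂ y₁)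
        = (x₁ ^ 3 * (x₁ ^ 3 + μ * (μ + 1)) ^ 2) / (((μ + 1) * x₁ ^ 3 + μ ^ 2) ^ 2) := by
      rw [WeierstrassCurve.Affine.slope_of_X_ne hXne, WeierstrassCurve.Affine.addX, hX2v, hY2v,
        show x₁ + ((μ + 1) * x₁ ^ 3 + μ ^ 2) / y₁ ^ 2 - x₁
          = ((μ + 1) * x₁ ^ 3 + μ ^ 2) / y₁ ^ 2 from by ring,
        div_div_eq_mul_div]
      simp only [Emu]
      field_simp
      rw [show y₁ ^ 4 = (y₁ ^ 2) ^ 2 by ring, heq, ← sub_eq_zero]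
      ring_nf
      linear_combination ((-3) * μ ^ 1 * x₁ ^ 7 + (16) * μ ^ 1 * x₁ ^ 8 + (-24) * μ ^ 1 * x₁ ^ 9 + (17) * μ ^ 1 * x₁ ^ 10 + (-5) * μ ^ 1 * x₁ ^ 11 + (-1) * μ ^ 2 * x₁ ^ 5 + (13) * μ ^ 2 * x₁ ^ 6 + (-31) * μ ^ 2 * x₁ ^ 7 + (40) * μ ^ 2 * x₁ ^ 8 + (-24) * μ ^ 2 * x₁ ^ 9 + (6) * μ ^ 2 * x₁ ^ 10 + (3) * μ ^ 3 * x₁ ^ 4 + (-11) * μ ^ 3 * x₁ ^ 5 + (30) * μ ^ 3 * x₁ ^ 6 + (-31) * μ ^ 3 * x₁ ^ 7 + (16) * μ ^ 3 * x₁ ^ 8 + (-2) * μ ^ 3 * x₁ ^ 9 + (2) * μ ^ 4 * x₁ ^ 3 + (4) * μ ^ 4 * x₁ ^ 4 + (-11) * μ ^ 4 * x₁ ^ 5 + (13) * μ ^ 4 * x₁ ^ 6 + (-3) * μ ^ 4 * x₁ ^ 7 + (1) * μ ^ 5 * x₁ ^ 1 + (-2) * μ ^ 5 * x₁ ^ 2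 + (2) * μ ^ 5 * x₁ ^ 3 + (3) * μ ^ 5 * x₁ ^ 4 + (-1) * μ ^ 5 * x₁ ^ 5 + (1) * μ ^ 6 * x₁ ^ 1 + (-2) * μ ^ 0 * x₁ ^ 9 + (6) * μ ^ 0 * x₁ ^ 10 + (-5) * μ ^ 0 * x₁ ^ 11 + (1) * μ ^ 0 * x₁ ^ 12) * h3
    rw [← hX3]
    refine ⟨_, WeierstrassCurve.Affine.nonsingular_add
      (WeierstrassCurve.Affine.nonsingular_add h h fun hh => hyne hh.2) h
      (fun hh => (hXne hh.1).elim), ?_⟩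
    rw [show (3 : ℤ) = 1 + 1 + 1 by norm_num, add_smul, add_smul, one_smul,
      WeierstrassCurve.Affine.Point.add_self_of_Y_ne hyne,
      WeierstrassCurve.Affine.Point.add_of_X_ne hXne]
end
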